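/- If f : ℝ^d → ℝ is convex with (α, L)-Hölder continuous gradient for α ∈ [0,1), then for all w, v ∈ ℝ^d and η > 0: ‖(w - η∇f(w)) - (v - η∇f(v))‖₂² ≤ ‖w - v‖₂² + c² · η^{2/(1-α)}, where c = √((1-α)/(1+α)) · (2^{-α}L)^{1/(1-α)}. -/

import Mathlib

/-!
Restricting `f` to segments gives the two one-sided Bregman bounds
`0 ≤ f y - f x - ⟪∇f x, y - x⟫ ≤ L ‖y - x‖^(1+α) / (1+α)`: the lower one is convexity, the upper
one integrates the Hölder bound on the derivative along the segment. Evaluating both at the point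
`b + t (∇f a - ∇f b)` and symmetrising in `a, b` yields a Hölder version of cocoercivity,
`2t ‖∇f w - ∇f v‖² ≤ ⟪∇f w - ∇f v, w - v⟫ + 2L (t ‖∇f w - ∇f v‖)^(1+α) / (1+α)`.
Expanding the square of the gradient step, the choice `t = η / 2` cancels the quadratic terms, and
Young's inequality with exponents `2 / (1+α)` and `2 / (1-α)` bounds the remaining Hölder term
by `c² η^(2/(1-α))`.
-/

open scoped RealInnerProductSpace
open Set

theorem sub_sub_le_of_hasDerivAt_sub_le_rpow {φ φ' : ℝ → ℝ} {K α : ℝ} (hα : 0 ≤ α)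
    (hφ : ∀ t, HasDerivAt φ (φ' t) t) (hφ' : ∀ t ∈ Icc (0 : ℝ) 1, φ' t - φ' 0 ≤ K * t ^ α) :
    φ 1 - φ 0 - φ' 0 ≤ K / (1 + α) := by
  set ψ : ℝ → ℝ := fun t => φ t - t * φ' 0 - K * t ^ (1 + α) / (1 + α)
  have hψ : ∀ t, HasDerivAt ψ (φ' t - φ' 0 - K * t ^ α) t := by
    intro t
    have hpow := Real.hasDerivAt_rpow_const (x := t) (p := 1 + α) (Or.inr (by linarith))
    refine (((hφ t).sub ((hasDerivAt_id t).mul_const (φ' 0))).sub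
      ((hpow.const_mul K).div_const (1 + α))).congr_deriv ?_
    rw [add_sub_cancel_left]
    field_simp
  have hanti : AntitoneOn ψ (Icc 0 1) :=
    antitoneOn_of_hasDerivWithinAt_nonpos (convex_Icc 0 1)
      (fun t _ => (hψ t).continuousAt.continuousWithinAt)
      (fun t _ => (hψ t).hasDerivWithinAt)
      (fun t ht => sub_nonpos.2 (hφ' t (interior_subset ht)))
  have := hanti (left_mem_Icc.2 zero_le_one) (right_mem_Icc.2 zero_le_one) zero_le_one
  simp only [ψ, Real.one_rpow, Real.zero_rpow (by linarith : 1 + α ≠ 0), one_mul, mul_one,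
    zero_mul, mul_zero, zero_div, sub_zero] at this
  linarith

theorem two_mul_mul_rpow_div_le {α c ρ : ℝ} (hα : α ∈ Ioo (-1 : ℝ) 1) (hc : 0 ≤ c) (hρ : 0 ≤ ρ) :
    2 * c * ρ ^ (1 + α) / (1 + α) ≤ ρ ^ 2 + (1 - α) / (1 + α) * c ^ (2 / (1 - α)) := by
  obtain ⟨hα₀, hα₁⟩ := hα
  have hpos : 0 < 1 + α := by linarith
  have hconj := Real.holderConjugate_one_div (a := (1 + α) / 2) (b := (1 - α) / 2)
    (by linarith) (by linarith) (by ring)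
  have hyoung := Real.young_inequality_of_nonneg (Real.rpow_nonneg hρ (1 + α)) hc hconj
  rw [← Real.rpow_mul hρ] at hyoung
  have e1 : (1 + α) * (1 / ((1 + α) / 2)) = 2 := by field_simp
  have e2 : 1 / ((1 - α) / 2) = 2 / (1 - α) := by field_simp
  rw [e1, e2, Real.rpow_two] at hyoung
  calc 2 * c * ρ ^ (1 + α) / (1 + α) = 2 / (1 + α) * (ρ ^ (1 + α) * c) := by ring
    _ ≤ 2 / (1 + α) * (ρ ^ 2 / (1 / ((1 + α) / 2)) + c ^ (2 / (1 - α)) / (2 / (1 - α))) := by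
      gcongr
    _ = _ := by field_simp

section HolderGradient

variable {E : Type*} [NormedAddCommGroup E] [InnerProductSpace ℝ E] [CompleteSpace E]
  {f : E → ℝ}

theorem hasDerivAt_comp_add_smul (x u : E) {t : ℝ} (hf : DifferentiableAt ℝ f (x + t • u)) :
    HasDerivAt (fun s : ℝ => f (x + s • u)) ⟪gradient f (x + t • u), u⟫ t := by
  have hline : HasDerivAt (fun s : ℝ => x + s • u) u t := by
    simpa using ((hasDerivAt_id t).smul_const u).const_add x
  simpa [InnerProductSpace.toDual_apply_apply, Function.comp_def] using
    (hasGradientAt_iff_hasFDerivAt.mp hf.hasGradientAt).comp_hasDerivAt t hline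

theorem ConvexOn.inner_gradient_le_sub (hconv : ConvexOn ℝ univ f) {x : E}
    (hf : DifferentiableAt ℝ f x) (y : E) : ⟪gradient f x, y - x⟫ ≤ f y - f x := by
  have hline : ConvexOn ℝ univ (fun t : ℝ => f (x + t • (y - x))) := by
    refine (hconv.comp_affineMap (AffineMap.lineMap x y)).congr fun t _ => ?_
    simp [AffineMap.lineMap_apply, add_comm]
  have hderiv := hasDerivAt_comp_add_smul x (y - x) (t := 0) (by simpa using hf)
  simpa [slope_def_field] using
    hline.le_slope_of_hasDerivAt (mem_univ 0) (mem_univ 1) one_pos hderiv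

variable {L α : ℝ}

theorem sub_sub_inner_gradient_le_of_holder (hα : 0 ≤ α) (hf : Differentiable ℝ f)
    (hholder : ∀ w v, ‖gradient f w - gradient f v‖ ≤ L * ‖w - v‖ ^ α) (x y : E) :
    f y - f x - ⟪gradient f x, y - x⟫ ≤ L * ‖y - x‖ ^ (1 + α) / (1 + α) := by
  set u := y - x
  have hφ' : ∀ t ∈ Icc (0 : ℝ) 1, ⟪gradient f (x + t • u), u⟫ - ⟪gradient f (x + (0 : ℝ) • u), u⟫
      ≤ L * ‖u‖ ^ (1 + α) * t ^ α := by
    intro t ht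
    calc ⟪gradient f (x + t • u), u⟫ - ⟪gradient f (x + (0 : ℝ) • u), u⟫
        = ⟪gradient f (x + t • u) - gradient f x, u⟫ := by simp [inner_sub_left]
      _ ≤ ‖gradient f (x + t • u) - gradient f x‖ * ‖u‖ := real_inner_le_norm _ _
      _ ≤ L * ‖t • u‖ ^ α * ‖u‖ := by
        gcongr
        simpa using hholder (x + t • u) x
      _ = L * ‖u‖ ^ (1 + α) * t ^ α := by
        rw [norm_smul, Real.norm_of_nonneg ht.1, Real.mul_rpow ht.1 (norm_nonneg u),
          Real.rpow_add' (norm_nonneg u) (by linarith), Real.rpow_one]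
        ring
  have := sub_sub_le_of_hasDerivAt_sub_le_rpow hα
    (fun t => hasDerivAt_comp_add_smul x u (hf _)) hφ'
  simpa [u, mul_div_right_comm] using this

variable (hα : 0 ≤ α) (hf : Differentiable ℝ f) (hconv : ConvexOn ℝ univ f)
  (hholder : ∀ w v, ‖gradient f w - gradient f v‖ ≤ L * ‖w - v‖ ^ α)
include hα hf hconv hholder

theorem sub_add_inner_gradient_add_mul_norm_sq_le (a b : E) {t : ℝ} (ht : 0 ≤ t) :
    f a - f b + ⟪gradient f a, b - a⟫ + t * ‖gradient f a - gradient f b‖ ^ 2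
      ≤ L * (t * ‖gradient f a - gradient f b‖) ^ (1 + α) / (1 + α) := by
  set g := gradient f a - gradient f b
  set z := b + t • g
  have hlower := hconv.inner_gradient_le_sub (hf a) z
  have hupper := sub_sub_inner_gradient_le_of_holder hα hf hholder b z
  have hzb : z - b = t • g := add_sub_cancel_left b _
  have hza : z - a = (b - a) + t • g := by simp only [z]; abel
  have hinner : ⟪gradient f a, z - a⟫ - ⟪gradient f b, z - b⟫
      = ⟪gradient f a, b - a⟫ + t * ‖g‖ ^ 2 := by
    rw [hza, hzb, inner_add_right, real_inner_smul_right, real_inner_smul_right,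
      ← real_inner_self_eq_norm_sq]
    simp only [g, inner_sub_left]
    ring
  have hnorm : ‖z - b‖ = t * ‖g‖ := by rw [hzb, norm_smul, Real.norm_of_nonneg ht]
  rw [hnorm] at hupper
  linarith

theorem two_mul_mul_norm_sq_le_inner_gradient_sub (w v : E) {t : ℝ} (ht : 0 ≤ t) :
    2 * t * ‖gradient f w - gradient f v‖ ^ 2
      ≤ ⟪gradient f w - gradient f v, w - v⟫
        + 2 * L * (t * ‖gradient f w - gradient f v‖) ^ (1 + α) / (1 + α) := by
  have hwv := sub_add_inner_gradient_add_mul_norm_sq_le hα hf hconv hholder w v ht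
  have hvw := sub_add_inner_gradient_add_mul_norm_sq_le hα hf hconv hholder v w ht
  rw [← neg_sub (gradient f w), norm_neg] at hvw
  have hsum : ⟪gradient f w, v - w⟫ + ⟪gradient f v, w - v⟫
      = -⟪gradient f w - gradient f v, w - v⟫ := by
    rw [← neg_sub w v, inner_neg_right, inner_sub_left]
    ring
  linear_combination hwv + hvw - hsum

end HolderGradient

theorem sq_sqrt_mul_rpow_mul_rpow {α L η : ℝ} (hα : α ∈ Ioo (-1 : ℝ) 1) (hL : 0 ≤ L)
    (hη : 0 ≤ η) :
    (Real.sqrt ((1 - α) / (1 + α)) * ((2 : ℝ) ^ (-α) * L) ^ (1 / (1 - α))) ^ 2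
        * η ^ (2 / (1 - α))
      = 4 * ((1 - α) / (1 + α) * (η * L / 2) ^ (2 / (1 - α))) := by
  obtain ⟨hα₀, hα₁⟩ := hα
  have hpow : ((2 : ℝ) ^ (1 - α)) ^ (2 / (1 - α)) = 4 := by
    rw [← Real.rpow_mul zero_le_two, mul_div_cancel₀ _ (by linarith : (1 - α) ≠ 0)]
    norm_num
  have hsplit : (2 : ℝ) ^ (-α) * L * η = 2 ^ (1 - α) * (η * L / 2) := by
    rw [sub_eq_add_neg, Real.rpow_add two_pos, Real.rpow_one]
    ring
  have hexp : 1 / (1 - α) * ((2 : ℕ) : ℝ) = 2 / (1 - α) := by ring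
  rw [mul_pow, Real.sq_sqrt (div_nonneg (by linarith) (by linarith)),
    ← Real.rpow_natCast _ 2, ← Real.rpow_mul (by positivity), hexp, mul_assoc,
    ← Real.mul_rpow (by positivity) hη, hsplit, Real.mul_rpow (by positivity) (by positivity),
    hpow]
  ring

theorem gd_almost_nonexpansive_holder {d : ℕ} (L α : ℝ) (hL : 0 < L)
    (hα : α ∈ Set.Ico (0 : ℝ) 1)
    (f : EuclideanSpace ℝ (Fin d) → ℝ)
    (hdiff : Differentiable ℝ f)
    (hconv : ConvexOn ℝ Set.univ f)
    (hholder : ∀ w v, ‖gradient f w - gradient f v‖ ≤ L * ‖w - v‖ ^ α) :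
    ∀ w v : EuclideanSpace ℝ (Fin d), ∀ η : ℝ, 0 < η →
      ‖(w - η • gradient f w) - (v - η • gradient f v)‖ ^ 2
        ≤ ‖w - v‖ ^ 2 +
          (Real.sqrt ((1 - α) / (1 + α)) * ((2 : ℝ) ^ (-α) * L) ^ (1 / (1 - α))) ^ 2
            * η ^ (2 / (1 - α)) := by
  intro w v η hη
  have hα' : α ∈ Ioo (-1 : ℝ) 1 := ⟨by linarith [hα.1], hα.2⟩
  have hcoco := two_mul_mul_norm_sq_le_inner_gradient_sub hα.1 hdiff hconv hholder w v
    (t := η / 2) (by positivity)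
  have hyoung := two_mul_mul_rpow_div_le hα' (c := η * L / 2)
    (ρ := η / 2 * ‖gradient f w - gradient f v‖) (by positivity) (by positivity)
  set g := gradient f w - gradient f v
  have hexpand : ‖(w - η • gradient f w) - (v - η • gradient f v)‖ ^ 2
      = ‖w - v‖ ^ 2 - 2 * η * ⟪g, w - v⟫ + η ^ 2 * ‖g‖ ^ 2 := by
    rw [show (w - η • gradient f w) - (v - η • gradient f v) = (w - v) - η • g by
      simp only [g, smul_sub]; abel, norm_sub_sq_real, real_inner_smul_right, real_inner_comm,
      norm_smul, mul_pow, Real.norm_eq_abs, sq_abs]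
    ring
  rw [hexpand, sq_sqrt_mul_rpow_mul_rpow hα' hL.le hη.le]
  linear_combination 2 * mul_le_mul_of_nonneg_left hcoco hη.le + 4 * hyoung
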